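/- For 0 < ε < 1/2, the Gaussian integral ∫ exp(ε‖q‖²) dγ(q) over L², where γ is the Gaussian measure induced by the random Fourier series q = γ₀ + Σ_{n≥1} γ_n cos(nx)/n + Σ_{n≤-1} γ_n sin(nx)/n with (γ_n) i.i.d. standard normals, equals (1-2ε)^{-1/2} · √(επ)/sin(√(ε)π). Consequently, by Chebyshev's inequality, γ{q : ‖q‖²_{L²} > N} ≤ K_ε e^{-εN} where K_ε is that constant. -/

import Mathlib

open MeasureTheory ProbabilityTheory Real Filter Finset
open scoped ENNReal Topology

/-!
By Parseval, `ε ‖q‖² = ∑ₖ ε wₖ γₖ²` with `w₀ = 1` and `w_{±n} = 1 / (2 n²)`. For a partial sum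
the exponential moment factors by independence, and `E exp (a γ²) = (1 - 2a)^{-1/2}` for a standard
Gaussian `γ`, so the two modes `±n` together contribute `(1 - ε / n²)⁻¹`. Euler's product
`sin (π x) = π x ∏ (1 - x² / n²)` at `x = √ε` gives the limit of these moments, and monotone
convergence passes to the full series; finiteness of the limit also makes the series converge
almost surely. The tail bound is the Chernoff bound for this exponential moment.
-/

lemma lintegral_exp_mul_sq_gaussianReal {a : ℝ} (ha : a < 1 / 2) :
    ∫⁻ x, ENNReal.ofReal (exp (a * x ^ 2)) ∂gaussianReal 0 1 =
      ENNReal.ofReal ((1 - 2 * a) ^ (-(1 : ℝ) / 2)) := by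
  have hb : 0 < 1 / 2 - a := by linarith
  have hdensity : ∀ x : ℝ, (gaussianPDF 0 1 * fun x => ENNReal.ofReal (exp (a * x ^ 2))) x =
      ENNReal.ofReal ((√(2 * π))⁻¹ * exp (-(1 / 2 - a) * x ^ 2)) := by
    intro x
    simp only [Pi.mul_apply, gaussianPDF, gaussianPDFReal, NNReal.coe_one, mul_one, sub_zero]
    rw [← ENNReal.ofReal_mul (by positivity), mul_assoc, ← exp_add]
    ring_nf
  rw [gaussianReal_of_var_ne_zero 0 one_ne_zero,
    lintegral_withDensity_eq_lintegral_mul _ (measurable_gaussianPDF 0 1) (by fun_prop),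
    lintegral_congr hdensity, ← ofReal_integral_eq_lintegral_ofReal
      ((integrable_exp_neg_mul_sq hb).const_mul _) (.of_forall fun x => by positivity),
    integral_const_mul, integral_gaussian,
    show π / (1 / 2 - a) = 2 * π * (1 - 2 * a)⁻¹ by field_simp,
    sqrt_mul (by positivity : (0 : ℝ) ≤ 2 * π), inv_mul_cancel_left₀ (by positivity),
    sqrt_eq_rpow, ← rpow_neg_one, ← rpow_mul (by linarith)]
  norm_num

lemma lintegral_exp_sum_mul_sq_of_iIndepFun {Ω ι : Type*} [MeasurableSpace Ω] {μ : Measure Ω}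
    {X : ι → Ω → ℝ} (hX : ∀ i, Measurable (X i)) (hindep : iIndepFun X μ)
    (hlaw : ∀ i, μ.map (X i) = gaussianReal 0 1) (s : Finset ι) {c : ι → ℝ}
    (hc : ∀ i ∈ s, c i < 1 / 2) :
    ∫⁻ ω, ENNReal.ofReal (exp (∑ i ∈ s, c i * X i ω ^ 2)) ∂μ =
      ∏ i ∈ s, ENNReal.ofReal ((1 - 2 * c i) ^ (-(1 : ℝ) / 2)) := by
  have hmeas : ∀ i, Measurable fun x : ℝ => ENNReal.ofReal (exp (c i * x ^ 2)) := by fun_prop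
  calc _ = ∫⁻ ω, ∏ i ∈ s, ENNReal.ofReal (exp (c i * X i ω ^ 2)) ∂μ := by
        simp_rw [exp_sum, ENNReal.ofReal_prod_of_nonneg fun i _ => (exp_pos _).le]
    _ = ∏ i ∈ s, ∫⁻ ω, ENNReal.ofReal (exp (c i * X i ω ^ 2)) ∂μ :=
        lintegral_prod_eq_prod_lintegral_of_indepFun s _ (hindep.comp _ hmeas)
          fun i => (hmeas i).comp (hX i)
    _ = _ := prod_congr rfl fun i hi => by
        rw [← lintegral_map (hmeas i) (hX i), hlaw, lintegral_exp_mul_sq_gaussianReal (hc i hi)]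

@[to_additive]
lemma Finset.prod_Icc_neg_natCast {M : Type*} [CommMonoid M] (f : ℤ → M) (m : ℕ) :
    ∏ k ∈ Icc (-(m : ℤ)) m, f k = f 0 * ∏ n ∈ range m, (f (n + 1) * f (-(n : ℤ) - 1)) := by
  induction m with
  | zero => simp
  | succ m ih =>
    rw [Nat.cast_succ, Icc_succ_succ, prod_union (by simp), prod_pair (by omega), ih,
      prod_range_succ, neg_add', mul_comm (f _) (f _)]
    ac_rfl

lemma tendsto_prod_range_inv_one_sub_sq_div {x : ℝ} (hx : sin (π * x) ≠ 0) :
    Tendsto (fun m => ∏ n ∈ range m, (1 - x ^ 2 / ((n : ℝ) + 1) ^ 2)⁻¹) atTop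
      (𝓝 (π * x / sin (π * x))) := by
  have hπx : π * x ≠ 0 := by rintro h; simp [h] at hx
  have hprod := ((tendsto_euler_sin_prod x).const_mul (π * x)⁻¹).inv₀
    (mul_ne_zero (inv_ne_zero hπx) hx)
  convert hprod using 2 with m
  · rw [← mul_assoc, inv_mul_cancel₀ hπx, one_mul, prod_inv_distrib]
  · rw [mul_inv, inv_inv, div_eq_mul_inv]

lemma lintegral_exp_add_tsum_of_tendsto {Ω : Type*} [MeasurableSpace Ω] {μ : Measure Ω}
    {a : Ω → ℝ} {f : ℕ → Ω → ℝ} (ha : Measurable a) (hf : ∀ n, Measurable (f n))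
    (hf0 : ∀ n ω, 0 ≤ f n ω) {L : ℝ≥0∞} (hL : L ≠ ∞)
    (h : Tendsto (fun m => ∫⁻ ω, ENNReal.ofReal (exp (a ω + ∑ n ∈ range m, f n ω)) ∂μ) atTop
      (𝓝 L)) :
    ∫⁻ ω, ENNReal.ofReal (exp (a ω + ∑' n, f n ω)) ∂μ = L := by
  set F : ℕ → Ω → ℝ≥0∞ := fun m ω => ENNReal.ofReal (exp (a ω + ∑ n ∈ range m, f n ω))
  have hF : ∀ m, Measurable (F m) := fun m => by fun_prop
  have hFmono : Monotone F := fun m m' hm ω => ENNReal.ofReal_le_ofReal <| exp_le_exp.2 <|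
    add_le_add_right (sum_le_sum_of_subset_of_nonneg (range_mono hm) fun n _ _ => hf0 n ω) _
  have hsup : ∫⁻ ω, ⨆ m, F m ω ∂μ = L := by
    rw [lintegral_iSup hF hFmono]
    exact tendsto_nhds_unique (tendsto_atTop_iSup fun m m' hm => lintegral_mono (hFmono hm)) h
  rw [← hsup]
  refine lintegral_congr_ae ?_
  filter_upwards [ae_lt_top (Measurable.iSup hF) (hsup ▸ hL)] with ω hω
  -- a finite supremum bounds the partial sums, so the series converges at `ω`
  have hbound : ∀ m, ∑ n ∈ range m, f n ω ≤ log (⨆ m, F m ω).toReal - a ω := fun m => by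
    have hle : exp (a ω + ∑ n ∈ range m, f n ω) ≤ (⨆ m, F m ω).toReal :=
      (ENNReal.ofReal_le_iff_le_toReal hω.ne).1 (le_iSup (F · ω) m)
    have := (le_log_iff_exp_le ((exp_pos _).trans_le hle)).2 hle
    linarith
  have hsum := (summable_of_sum_range_le (hf0 · ω) hbound).hasSum.tendsto_sum_nat
  refine tendsto_nhds_unique ?_ (tendsto_atTop_iSup fun m m' hm => hFmono hm ω)
  exact (ENNReal.continuous_ofReal.tendsto _).comp
    ((continuous_exp.tendsto _).comp (hsum.const_add (a ω)))

lemma integral_exp_mul_eq_and_measure_gt_le {Ω : Type*} [MeasurableSpace Ω] {μ : Measure Ω}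
    [IsFiniteMeasure μ] {X : Ω → ℝ} (hX : Measurable X) {t K : ℝ} (ht : 0 ≤ t) (hK : 0 ≤ K)
    (h : ∫⁻ ω, ENNReal.ofReal (exp (t * X ω)) ∂μ = ENNReal.ofReal K) :
    ∫ ω, exp (t * X ω) ∂μ = K ∧ ∀ N : ℝ, (μ {ω | X ω > N}).toReal ≤ K * exp (-t * N) := by
  have hpos : 0 ≤ᵐ[μ] fun ω => exp (t * X ω) := .of_forall fun _ => (exp_pos _).le
  have hint : Integrable (fun ω => exp (t * X ω)) μ :=
    ⟨by fun_prop, (hasFiniteIntegral_iff_ofReal hpos).2 (h ▸ ENNReal.ofReal_lt_top)⟩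
  have hI : ∫ ω, exp (t * X ω) ∂μ = K := by
    rw [integral_eq_lintegral_of_nonneg_ae hpos hint.1, h, ENNReal.toReal_ofReal hK]
  refine ⟨hI, fun N => ?_⟩
  calc (μ {ω | X ω > N}).toReal ≤ μ.real {ω | N ≤ X ω} :=
        measureReal_mono fun _ (hω : N < _) => hω.le
    _ ≤ exp (-t * N) * mgf X μ t := measure_ge_le_exp_mul_mgf N ht hint
    _ = K * exp (-t * N) := by rw [mgf, hI, mul_comm]

lemma sin_sqrt_mul_pi_pos {ε : ℝ} (h0 : 0 < ε) (h1 : ε < 1) : 0 < sin (√ε * π) := by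
  have : √ε < 1 := (sqrt_lt' one_pos).2 (by simpa using h1)
  exact sin_pos_of_pos_of_lt_pi (by positivity) (by nlinarith [pi_pos, sqrt_pos.2 h0])

/-- The coefficient of `γₖ²` in `‖q‖²`: by Parseval, `cos (n x) / n` and `sin (n x) / n` have
squared norm `1 / (2 n²)`. -/
noncomputable def parsevalWeight (k : ℤ) : ℝ := if k = 0 then 1 else 1 / (2 * (k : ℝ) ^ 2)

lemma parsevalWeight_zero : parsevalWeight 0 = 1 := if_pos rfl

lemma parsevalWeight_natCast_add_one (n : ℕ) :
    parsevalWeight (n + 1) = 1 / (2 * ((n : ℝ) + 1) ^ 2) := by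
  rw [parsevalWeight, if_neg (by omega)]
  push_cast
  rfl

lemma parsevalWeight_neg_natCast_sub_one (n : ℕ) :
    parsevalWeight (-(n : ℤ) - 1) = 1 / (2 * ((n : ℝ) + 1) ^ 2) := by
  rw [parsevalWeight, if_neg (by omega)]
  push_cast
  ring

lemma parsevalWeight_le_one (k : ℤ) : parsevalWeight k ≤ 1 := by
  unfold parsevalWeight
  split_ifs with hk
  · rfl
  · have : (1 : ℝ) ≤ (k : ℝ) ^ 2 := by
      rw [← Int.cast_pow, ← Int.cast_one, Int.cast_le]
      nlinarith [Int.one_le_abs hk, sq_abs k]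
    rw [div_le_one (by positivity)]
    linarith

noncomputable def parsevalSummand (x : ℤ → ℝ) (n : ℕ) : ℝ :=
  (x ((n : ℤ) + 1) ^ 2 + x (-(n : ℤ) - 1) ^ 2) / ((n : ℝ) + 1) ^ 2

lemma parsevalSummand_nonneg (x : ℤ → ℝ) (n : ℕ) : 0 ≤ parsevalSummand x n := by
  unfold parsevalSummand
  positivity

lemma sum_Icc_parsevalWeight_mul_sq (x : ℤ → ℝ) (ε : ℝ) (m : ℕ) :
    ∑ k ∈ Icc (-(m : ℤ)) m, ε * parsevalWeight k * x k ^ 2 =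
      ε * x 0 ^ 2 + ∑ n ∈ range m, ε / 2 * parsevalSummand x n := by
  rw [sum_Icc_neg_natCast, parsevalWeight_zero, mul_one]
  congr 1
  refine sum_congr rfl fun n _ => ?_
  rw [parsevalWeight_natCast_add_one, parsevalWeight_neg_natCast_sub_one, parsevalSummand]
  field_simp

lemma div_natCast_add_one_sq_le {ε : ℝ} (h0 : 0 ≤ ε) (n : ℕ) : ε / ((n : ℝ) + 1) ^ 2 ≤ ε :=
  div_le_self h0 (one_le_pow₀ (by linarith [n.cast_nonneg (α := ℝ)]))

lemma prod_Icc_one_sub_parsevalWeight_rpow {ε : ℝ} (h0 : 0 ≤ ε) (h1 : ε < 1 / 2) (m : ℕ) :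
    ∏ k ∈ Icc (-(m : ℤ)) m, ENNReal.ofReal ((1 - 2 * (ε * parsevalWeight k)) ^ (-(1 : ℝ) / 2)) =
      ENNReal.ofReal
        ((1 - 2 * ε) ^ (-(1 : ℝ) / 2) * ∏ n ∈ range m, (1 - ε / ((n : ℝ) + 1) ^ 2)⁻¹) := by
  have hpos (n : ℕ) : 0 < 1 - ε / ((n : ℝ) + 1) ^ 2 := by
    linarith [div_natCast_add_one_sq_le h0 n]
  have hpair (n : ℕ) :
      ENNReal.ofReal ((1 - 2 * (ε * (1 / (2 * ((n : ℝ) + 1) ^ 2)))) ^ (-(1 : ℝ) / 2)) *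
        ENNReal.ofReal ((1 - 2 * (ε * (1 / (2 * ((n : ℝ) + 1) ^ 2)))) ^ (-(1 : ℝ) / 2)) =
      ENNReal.ofReal (1 - ε / ((n : ℝ) + 1) ^ 2)⁻¹ := by
    rw [show 1 - 2 * (ε * (1 / (2 * ((n : ℝ) + 1) ^ 2))) = 1 - ε / ((n : ℝ) + 1) ^ 2 by
        field_simp,
      ← ENNReal.ofReal_mul (rpow_nonneg (hpos n).le _), ← rpow_add (hpos n)]
    norm_num [rpow_neg_one]
  rw [prod_Icc_neg_natCast, parsevalWeight_zero, mul_one,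
    ENNReal.ofReal_mul (rpow_nonneg (by linarith) _),
    ENNReal.ofReal_prod_of_nonneg fun n _ => inv_nonneg.2 (hpos n).le]
  simp_rw [parsevalWeight_natCast_add_one, parsevalWeight_neg_natCast_sub_one, hpair]

section GaussianFourierSeries

variable {Ω : Type*} [MeasurableSpace Ω] {μ : Measure Ω} {γ : ℤ → Ω → ℝ}

lemma lintegral_exp_partial_parseval (hmeas : ∀ k, Measurable (γ k)) (hindep : iIndepFun γ μ)
    (hgauss : ∀ k, μ.map (γ k) = gaussianReal 0 1) {ε : ℝ} (h0 : 0 ≤ ε) (h1 : ε < 1 / 2)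
    (m : ℕ) :
    ∫⁻ ω, ENNReal.ofReal
        (exp (ε * γ 0 ω ^ 2 + ∑ n ∈ range m, ε / 2 * parsevalSummand (γ · ω) n)) ∂μ =
      ENNReal.ofReal
        ((1 - 2 * ε) ^ (-(1 : ℝ) / 2) * ∏ n ∈ range m, (1 - ε / ((n : ℝ) + 1) ^ 2)⁻¹) := by
  calc _ = ∫⁻ ω, ENNReal.ofReal
        (exp (∑ k ∈ Icc (-(m : ℤ)) m, ε * parsevalWeight k * γ k ω ^ 2)) ∂μ := by
        simp_rw [sum_Icc_parsevalWeight_mul_sq]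
    _ = _ := by
      rw [lintegral_exp_sum_mul_sq_of_iIndepFun hmeas hindep hgauss _ fun k _ =>
          (mul_le_of_le_one_right h0 (parsevalWeight_le_one k)).trans_lt h1,
        prod_Icc_one_sub_parsevalWeight_rpow h0 h1]

lemma lintegral_exp_mul_parseval (hmeas : ∀ k, Measurable (γ k)) (hindep : iIndepFun γ μ)
    (hgauss : ∀ k, μ.map (γ k) = gaussianReal 0 1) {ε : ℝ} (h0 : 0 < ε) (h1 : ε < 1 / 2) :
    ∫⁻ ω, ENNReal.ofReal (exp (ε * (γ 0 ω ^ 2 + 1 / 2 * ∑' n, parsevalSummand (γ · ω) n))) ∂μ =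
      ENNReal.ofReal ((1 - 2 * ε) ^ (-(1 : ℝ) / 2) * (√ε * π) / sin (√ε * π)) := by
  have hsplit (ω : Ω) : ε * (γ 0 ω ^ 2 + 1 / 2 * ∑' n, parsevalSummand (γ · ω) n) =
      ε * γ 0 ω ^ 2 + ∑' n, ε / 2 * parsevalSummand (γ · ω) n := by
    rw [tsum_mul_left]
    ring
  simp_rw [hsplit]
  refine lintegral_exp_add_tsum_of_tendsto (by fun_prop)
    (fun n => by unfold parsevalSummand; fun_prop)
    (fun n ω => mul_nonneg (by positivity) (parsevalSummand_nonneg _ n))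
    ENNReal.ofReal_ne_top ?_
  simp_rw [lintegral_exp_partial_parseval hmeas hindep hgauss h0.le h1]
  have hsin : sin (π * √ε) ≠ 0 := by
    rw [mul_comm]
    exact (sin_sqrt_mul_pi_pos h0 (by linarith)).ne'
  have hprod := tendsto_prod_range_inv_one_sub_sq_div hsin
  rw [sq_sqrt h0.le, mul_comm π] at hprod
  rw [mul_div_assoc]
  exact (ENNReal.continuous_ofReal.tendsto _).comp (hprod.const_mul _)

lemma measurable_parseval (hmeas : ∀ k, Measurable (γ k)) :
    Measurable fun ω => γ 0 ω ^ 2 + 1 / 2 * ∑' n, parsevalSummand (γ · ω) n :=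
  ((hmeas 0).pow_const 2).add
    ((Measurable.tsum fun n => by unfold parsevalSummand; fun_prop).const_mul _)

end GaussianFourierSeries

/-- For `0 < ε < 1/2`, the Gaussian integral `∫ exp (ε ‖q‖²) dγ(q)` over
`L²`, where `γ` is induced by the random Fourier series
`q = γ₀ + ∑_{n≥1} γₙ cos(nx)/n + ∑_{n≤-1} γₙ sin(nx)/n` with `(γₙ)` i.i.d. standard normals
(so that by Parseval `‖q‖² = γ₀² + (1/2) ∑_{n≥1} (γₙ² + γ₋ₙ²)/n²`), equals
`(1-2ε)^{-1/2} · √ε π / sin(√ε π)`.  Consequently `γ{‖q‖² > N} ≤ K_ε e^{-εN}`. -/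
theorem stmt0 {Ω : Type*} [MeasureSpace Ω] [IsProbabilityMeasure (ℙ : Measure Ω)]
    (γ : ℤ → Ω → ℝ) (hmeas : ∀ n, Measurable (γ n))
    (hindep : iIndepFun γ ℙ)
    (hgauss : ∀ n, Measure.map (γ n) ℙ = gaussianReal 0 1)
    (ε : ℝ) (hε1 : 0 < ε) (hε2 : ε < 1 / 2)
    (normSq : Ω → ℝ)
    (hnormSq : ∀ ω, normSq ω = (γ 0 ω) ^ 2 +
      (1 / 2) * ∑' n : ℕ, ((γ ((n : ℤ) + 1) ω) ^ 2 + (γ (-(n : ℤ) - 1) ω) ^ 2) / ((n : ℝ) + 1) ^ 2)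
    (K : ℝ)
    (hK : K = (1 - 2 * ε) ^ (-(1 : ℝ) / 2) * (Real.sqrt ε * π) / Real.sin (Real.sqrt ε * π)) :
    (∫ ω, Real.exp (ε * normSq ω)) = K ∧
    ∀ N : ℝ, (ℙ {ω | normSq ω > N}).toReal ≤ K * Real.exp (-ε * N) := by
  obtain rfl : normSq = fun ω => γ 0 ω ^ 2 + 1 / 2 * ∑' n, parsevalSummand (γ · ω) n :=
    funext hnormSq
  have hK0 : 0 ≤ K := by
    have := sin_sqrt_mul_pi_pos hε1 (by linarith)
    have := rpow_nonneg (by linarith : (0 : ℝ) ≤ 1 - 2 * ε) (-(1 : ℝ) / 2)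
    rw [hK]
    positivity
  exact integral_exp_mul_eq_and_measure_gt_le (measurable_parseval hmeas) hε1.le hK0
    (hK ▸ lintegral_exp_mul_parseval hmeas hindep hgauss hε1 hε2)
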